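/- arXiv:1407.4351 — 2 statements merged into one kernel-verified Lean document; each statement's English description precedes it below -/
import Mathlib

section
/- Suppose F is continuously differentiable on a neighbourhood of 0 ∈ V and its Fréchet derivative at 0 is the identity map of V. Then the G-average F̃(u) = ∫_G ρ(g) (F(ρ(g)⁻¹ u)) dg (Bochner integral with respect to the Haar probability measure) is Fréchet differentiable at 0 and its derivative at 0 is the identity map of V. -/
open MeasureTheory

/-- Let `G` be a compact topological group with Haar probability measure `μ`
and `ρ` a continuous representation of `G` on a real Banach space `V`. If `F : V → V` is
continuously differentiable near `0` with Fréchet derivative the identity at `0`, then the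
`G`-average `u ↦ ∫ g, ρ g (F (ρ g⁻¹ u)) dμ` is Fréchet differentiable at `0` with
derivative the identity map of `V`. -/
theorem stmt3 {G : Type*} [Group G] [TopologicalSpace G] [IsTopologicalGroup G]
    [CompactSpace G] [MeasurableSpace G] [BorelSpace G]
    (μ : Measure G) [μ.IsHaarMeasure] [IsProbabilityMeasure μ]
    {V : Type*} [NormedAddCommGroup V] [NormedSpace ℝ V] [CompleteSpace V]
    (ρ : G →* (V ≃L[ℝ] V))
    (hρ : Continuous fun p : G × V => ρ p.1 p.2)
    (F : V → V)
    (hF : ContDiffAt ℝ 1 F 0)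
    (hF0 : fderiv ℝ F 0 = ContinuousLinearMap.id ℝ V)
    (hInt : ∀ u : V, Integrable (fun g => ρ g (F (ρ g⁻¹ u))) μ) :
    HasFDerivAt (fun u : V => ∫ g, ρ g (F (ρ g⁻¹ u)) ∂μ)
      (ContinuousLinearMap.id ℝ V) 0 := by
  -- uniform bound on the operator norms
  obtain ⟨M₀, hM₀⟩ : ∃ M, ∀ g : G, ‖((ρ g : V ≃L[ℝ] V) : V →L[ℝ] V)‖ ≤ M := by
    apply banach_steinhaus
    intro x
    have hc : Continuous fun g : G => ‖ρ g x‖ :=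
      (hρ.comp (continuous_id.prodMk continuous_const)).norm
    obtain ⟨C, hC⟩ := (isCompact_range hc).bddAbove
    exact ⟨C, fun g => hC ⟨g, rfl⟩⟩
  set M : ℝ := max M₀ 1 with hMdef
  have hM1 : (1:ℝ) ≤ M := le_max_right _ _
  have hMpos : (0:ℝ) < M := lt_of_lt_of_le one_pos hM1
  have hM : ∀ g : G, ∀ v : V, ‖ρ g v‖ ≤ M * ‖v‖ := by
    intro g v
    calc ‖ρ g v‖ ≤ ‖((ρ g : V ≃L[ℝ] V) : V →L[ℝ] V)‖ * ‖v‖ :=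
          ((ρ g : V ≃L[ℝ] V) : V →L[ℝ] V).le_opNorm v
      _ ≤ M * ‖v‖ := by
          gcongr
          exact (hM₀ g).trans (le_max_left _ _)
  have hgg : ∀ g : G, ∀ v : V, ρ g (ρ g⁻¹ v) = v := by
    intro g v
    have h1 : ρ g * ρ g⁻¹ = 1 := by rw [← map_mul, mul_inv_cancel, map_one]
    calc ρ g (ρ g⁻¹ v) = (ρ g * ρ g⁻¹) v := rfl
      _ = v := by rw [h1]; rfl
  -- derivative of F at 0
  have hd : HasFDerivAt F (ContinuousLinearMap.id ℝ V) 0 := by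
    rw [← hF0]; exact (hF.differentiableAt one_ne_zero).hasFDerivAt
  rw [hasFDerivAt_iff_isLittleO_nhds_zero] at hd ⊢
  rw [Asymptotics.isLittleO_iff] at hd ⊢
  intro c hc
  have hεpos : (0:ℝ) < c / (M * M) := div_pos hc (mul_pos hMpos hMpos)
  obtain ⟨δ, hδpos, hδ⟩ := Metric.eventually_nhds_iff_ball.1 (hd hεpos)
  rw [Metric.eventually_nhds_iff_ball]
  refine ⟨δ / M, div_pos hδpos hMpos, fun u hu => ?_⟩
  simp only [zero_add, ContinuousLinearMap.id_apply] at hδ ⊢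
  -- integrability facts
  have hiu : Integrable (fun g => ρ g (F (ρ g⁻¹ u))) μ := hInt u
  have hi0 : Integrable (fun g => ρ g (F 0)) μ := by
    have := hInt 0
    simpa using this
  have hiconst : Integrable (fun _ : G => u) μ := integrable_const u
  have hpt : ∀ g : G, ρ g (F (ρ g⁻¹ u) - F 0 - ρ g⁻¹ u)
      = ρ g (F (ρ g⁻¹ u)) - ρ g (F 0) - u := by
    intro g
    rw [map_sub, map_sub, hgg]
  have hf0 : (∫ g, ρ g (F (ρ g⁻¹ (0:V))) ∂μ) = ∫ g, ρ g (F 0) ∂μ := by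
    simp
  have key : (∫ g, ρ g (F (ρ g⁻¹ u)) ∂μ) - (∫ g, ρ g (F (ρ g⁻¹ (0:V))) ∂μ) - u
      = ∫ g, ρ g (F (ρ g⁻¹ u) - F 0 - ρ g⁻¹ u) ∂μ := by
    rw [hf0]
    have : (∫ g, ρ g (F (ρ g⁻¹ u) - F 0 - ρ g⁻¹ u) ∂μ)
        = ∫ g, (ρ g (F (ρ g⁻¹ u)) - ρ g (F 0) - u) ∂μ := by
      exact integral_congr_ae (Filter.Eventually.of_forall fun g => hpt g)
    have hi2 : Integrable (fun g => ρ g (F (ρ g⁻¹ u)) - ρ g (F 0)) μ := hiu.sub hi0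
    rw [this, integral_sub hi2 hiconst, integral_sub hiu hi0, integral_const]
    simp
  rw [key]
  -- bound the integrand uniformly
  have hbound : ∀ g : G, ‖ρ g (F (ρ g⁻¹ u) - F 0 - ρ g⁻¹ u)‖ ≤ c * ‖u‖ := by
    intro g
    have hwu : ‖ρ g⁻¹ u‖ ≤ M * ‖u‖ := hM g⁻¹ u
    have hw : ρ g⁻¹ u ∈ Metric.ball (0:V) δ := by
      rw [Metric.mem_ball, dist_zero_right]
      calc ‖ρ g⁻¹ u‖ ≤ M * ‖u‖ := hwu
        _ < M * (δ / M) := by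
            have hu' : ‖u‖ < δ / M := by
              rw [Metric.mem_ball, dist_zero_right] at hu; exact hu
            exact (mul_lt_mul_iff_right₀ hMpos).2 hu'
        _ = δ := by field_simp
    have h1 : ‖F (ρ g⁻¹ u) - F 0 - ρ g⁻¹ u‖ ≤ c / (M * M) * ‖ρ g⁻¹ u‖ := hδ _ hw
    calc ‖ρ g (F (ρ g⁻¹ u) - F 0 - ρ g⁻¹ u)‖
        ≤ M * ‖F (ρ g⁻¹ u) - F 0 - ρ g⁻¹ u‖ := hM g _
      _ ≤ M * (c / (M * M) * (M * ‖u‖)) := by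
          gcongr
          calc ‖F (ρ g⁻¹ u) - F 0 - ρ g⁻¹ u‖ ≤ c / (M * M) * ‖ρ g⁻¹ u‖ := h1
            _ ≤ c / (M * M) * (M * ‖u‖) := by gcongr
      _ = c * ‖u‖ := by field_simp
  calc ‖∫ g, ρ g (F (ρ g⁻¹ u) - F 0 - ρ g⁻¹ u) ∂μ‖
      ≤ c * ‖u‖ := by
        have := norm_integral_le_of_norm_le_const
          (μ := μ) (C := c * ‖u‖)
          (Filter.Eventually.of_forall hbound)
        simpa using this
end

section
/- Let G be a compact topological group acting continuously on a topological space M (the action map G × M → M is continuous), let m ∈ M satisfy g • m = m for all g ∈ G, and let W be an open neighbourhood of m. Then there exists an open set V with m ∈ V ⊆ W that is G-invariant: g • V = V for every g ∈ G. -/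
open scoped Pointwise

/-- If a compact topological group `G` acts continuously on a topological
space `M`, `m` is a fixed point of the action and `W` is an open neighbourhood of `m`,
then there is a `G`-invariant open set `V` with `m ∈ V ⊆ W`. -/
theorem stmt15 {G M : Type*} [Group G] [TopologicalSpace G] [IsTopologicalGroup G]
    [CompactSpace G] [TopologicalSpace M] [MulAction G M]
    (hact : Continuous fun p : G × M => p.1 • p.2)
    (m : M) (hm : ∀ g : G, g • m = m)
    (W : Set M) (hW : IsOpen W) (hmW : m ∈ W) :
    ∃ V : Set M, IsOpen V ∧ m ∈ V ∧ V ⊆ W ∧ ∀ g : G, g • V = V := by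
  set V : Set M := {x | ∀ g : G, g • x ∈ W} with hV
  have hopen : IsOpen V := by
    rw [isOpen_iff_mem_nhds]
    intro x hx
    have hsub : (Set.univ : Set G) ×ˢ ({x} : Set M) ⊆
        (fun p : G × M => p.1 • p.2) ⁻¹' W := by
      rintro ⟨g, y⟩ ⟨-, hy⟩
      simp only [Set.mem_singleton_iff] at hy
      subst hy
      exact hx g
    obtain ⟨u, v, _, hvo, hsu, htv, huv⟩ :=
      generalized_tube_lemma isCompact_univ isCompact_singleton
        (hW.preimage hact) hsub
    refine Filter.mem_of_superset (hvo.mem_nhds (htv rfl)) ?_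
    intro y hy g
    exact huv (Set.mk_mem_prod (hsu trivial) hy)
  refine ⟨V, hopen, fun g => by rw [hm g]; exact hmW, fun x hx => by simpa using hx 1, ?_⟩
  intro g
  ext x
  constructor
  · rintro ⟨y, hy, rfl⟩
    intro g'
    simpa [mul_smul] using hy (g' * g)
  · intro hx
    exact ⟨g⁻¹ • x, fun g' => by simpa [mul_smul] using hx (g' * g⁻¹), by simp⟩
end
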